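/- arXiv:1010.1061 — 4 statements merged into one kernel-verified Lean document; each statement's English description precedes it below -/
import Mathlib

section
/- Let R be a commutative Noetherian ring, J ⊆ I ideals, and x₁,…,xₙ ∈ R. For each positive integer t, let 𝔞_t denote the coefficient ideal of I + (x₁^t,…,xₙ^t) relative to J + (x₁^t,…,xₙ^t) (the largest ideal 𝔟 with (I + (x₁^t,…,xₙ^t))·𝔟 = (J + (x₁^t,…,xₙ^t))·𝔟). Then the sequence (𝔞_t) is decreasing: 𝔞_{t+1} ⊆ 𝔞_t for all t ≥ 1. -/
/-- The coefficient ideal of `I` relative to `J`. -/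
def coeffIdeal {R : Type*} [CommRing R] (I J : Ideal R) : Ideal R :=
  sSup {b : Ideal R | I * b = J * b}

/-- The ideal generated by the `t`-th powers of the `xᵢ`. -/
def powsIdeal {R : Type*} [CommRing R] {n : ℕ} (x : Fin n → R) (t : ℕ) : Ideal R :=
  Ideal.span (Set.range fun i => x i ^ t)

lemma coeffIdeal_spec {R : Type*} [CommRing R] (I J : Ideal R) :
    I * coeffIdeal I J = J * coeffIdeal I J := by
  rw [coeffIdeal, sSup_eq_iSup', Submodule.mul_iSup, Submodule.mul_iSup]
  exact iSup_congr fun b => b.2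

lemma powsIdeal_succ_le {R : Type*} [CommRing R] {n : ℕ} (x : Fin n → R) (t : ℕ) :
    powsIdeal x (t + 1) ≤ powsIdeal x t := by
  rw [powsIdeal, Ideal.span_le]
  rintro _ ⟨i, rfl⟩
  show x i ^ (t + 1) ∈ powsIdeal x t
  rw [pow_succ]
  exact Ideal.mul_mem_right _ _ (Ideal.subset_span ⟨i, rfl⟩)

/-- The sequence `𝔞_t = 𝔞(I + (x₁^t,…,xₙ^t), J + (x₁^t,…,xₙ^t))` is decreasing. -/
theorem coeffIdeal_seq_antitone {R : Type*} [CommRing R] [IsNoetherianRing R]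
    (I J : Ideal R) (hJI : J ≤ I) {n : ℕ} (x : Fin n → R) (t : ℕ) (ht : 1 ≤ t) :
    coeffIdeal (I + powsIdeal x (t + 1)) (J + powsIdeal x (t + 1)) ≤
      coeffIdeal (I + powsIdeal x t) (J + powsIdeal x t) := by
  set a := coeffIdeal (I + powsIdeal x (t + 1)) (J + powsIdeal x (t + 1))
  have hspec := coeffIdeal_spec (I + powsIdeal x (t + 1)) (J + powsIdeal x (t + 1))
  apply le_sSup
  show (I + powsIdeal x t) * a = (J + powsIdeal x t) * a
  have hPle : powsIdeal x (t + 1) ≤ powsIdeal x t := powsIdeal_succ_le x t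
  apply le_antisymm
  · rw [add_mul]
    apply sup_le
    · calc I * a ≤ (I + powsIdeal x (t + 1)) * a :=
            Ideal.mul_mono le_sup_left le_rfl
        _ = (J + powsIdeal x (t + 1)) * a := hspec
        _ ≤ (J + powsIdeal x t) * a :=
            Ideal.mul_mono (sup_le_sup_left hPle J) le_rfl
    · exact Ideal.mul_mono le_sup_right le_rfl
  · exact Ideal.mul_mono (sup_le_sup_right hJI _) le_rfl
end

section
/- For ideals J ⊆ I of a commutative Noetherian ring R, the set of ideals 𝔟 with I·𝔟 = J·𝔟 has a largest element, namely the sum of all such ideals; this largest element is called the coefficient ideal 𝔞(I,J). -/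
/-- The set of ideals `b` with `I * b = J * b` has a largest element, namely their sum,
the coefficient ideal `𝔞(I,J)`. -/
theorem coeffIdeal_isGreatest {R : Type*} [CommRing R] [IsNoetherianRing R]
    (I J : Ideal R) (hJI : J ≤ I) :
    I * coeffIdeal I J = J * coeffIdeal I J ∧
      ∀ b : Ideal R, I * b = J * b → b ≤ coeffIdeal I J := by
  constructor
  · rw [coeffIdeal, sSup_eq_iSup, Submodule.mul_iSup, Submodule.mul_iSup]
    refine iSup_congr fun b => ?_
    rw [Submodule.mul_iSup, Submodule.mul_iSup]
    exact iSup_congr fun hb => hb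
  · exact fun b hb => le_sSup hb
end

section
/- Chevalley's theorem: Let (R,𝔪) be a complete Noetherian local ring and (J_n) a decreasing sequence of ideals with ⋂_n J_n = 0. Then for every n ≥ 1 there exists t_n ≥ 1 with J_{t_n} ⊆ 𝔪^n. -/
open IsLocalRing

section Aux

variable {R : Type*} [CommRing R] [IsLocalRing R]

/-- A finitely generated module over a local ring killed by the maximal ideal is Artinian. -/
lemma chevalley_aux_isArtinian_of_torsion (K : Type*) [AddCommGroup K] [Module R K]
    [Module.Finite R K]
    (h : Module.IsTorsionBySet R K (maximalIdeal R : Set R)) : IsArtinian R K := by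
  letI := h.module
  haveI : IsScalarTower R (R ⧸ maximalIdeal R) K := h.isScalarTower
  letI : Field (R ⧸ maximalIdeal R) := Ideal.Quotient.field _
  haveI : Module.Finite (R ⧸ maximalIdeal R) K :=
    Module.Finite.of_restrictScalars_finite R (R ⧸ maximalIdeal R) K
  haveI hart : IsArtinian (R ⧸ maximalIdeal R) K := inferInstance
  set F : Submodule R K → Submodule (R ⧸ maximalIdeal R) K := fun p =>
    { carrier := (p : Set K)
      add_mem' := fun h1 h2 => p.add_mem h1 h2
      zero_mem' := p.zero_mem
      smul_mem' := by
        intro s y hy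
        obtain ⟨r, rfl⟩ := Ideal.Quotient.mk_surjective s
        have hs : (Ideal.Quotient.mk (maximalIdeal R) r) • y = r • y := h.mk_smul r y
        rw [hs]
        exact p.smul_mem r hy } with hF
  have hmono : ∀ p q : Submodule R K, p < q → F p < F q := by
    intro p q hpq
    rw [SetLike.lt_iff_le_and_exists] at hpq ⊢
    obtain ⟨hle, y, hyq, hyp⟩ := hpq
    exact ⟨fun z hz => hle hz, y, hyq, hyp⟩
  exact ⟨Subrelation.wf (fun {p q} hpq => hmono p q hpq)
    (InvImage.wf F ((isArtinian_iff _ _).mp hart))⟩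

/-- The quotient by a power of the maximal ideal is Artinian. -/
lemma chevalley_aux_isArtinian_quot_pow [IsNoetherianRing R] (k : ℕ) :
    IsArtinian R (R ⧸ (maximalIdeal R ^ k : Ideal R)) := by
  induction k with
  | zero =>
      haveI : Subsingleton (R ⧸ (maximalIdeal R ^ 0 : Ideal R)) := by
        rw [pow_zero, Ideal.one_eq_top]
        exact Submodule.Quotient.subsingleton_iff.mpr rfl
      infer_instance
  | succ k ih =>
      set I : Ideal R := maximalIdeal R ^ (k + 1) with hI
      set I' : Ideal R := maximalIdeal R ^ k with hI'
      have hle : I ≤ I' := Ideal.pow_le_pow_right (Nat.le_succ k)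
      set K : Submodule R (R ⧸ I) := Submodule.map I.mkQ I' with hK
      have hg : I ≤ LinearMap.ker I'.mkQ := by rw [Submodule.ker_mkQ]; exact hle
      set g : (R ⧸ I) →ₗ[R] (R ⧸ I') := I.liftQ I'.mkQ hg with hgdef
      have hker : LinearMap.ker g = K := by
        rw [hgdef, Submodule.ker_liftQ, Submodule.ker_mkQ]
      haveI hKart : IsArtinian R K := by
        apply chevalley_aux_isArtinian_of_torsion
        intro x a
        obtain ⟨y, hy, hxy⟩ := Submodule.mem_map.mp x.2
        have hmem : (a : R) * y ∈ I := by
          rw [hI, pow_succ, mul_comm (maximalIdeal R ^ k)]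
          exact Ideal.mul_mem_mul a.2 hy
        apply Subtype.ext
        rw [Submodule.coe_smul, ← hxy, ← map_smul, smul_eq_mul]
        show I.mkQ ((a : R) * y) = ((0 : K) : R ⧸ I)
        rw [ZeroMemClass.coe_zero, Submodule.mkQ_apply]
        exact (Submodule.Quotient.mk_eq_zero _).mpr hmem
      exact isArtinian_of_range_eq_ker K.subtype g
        (by rw [Submodule.range_subtype, hker])

/-- Stabilization: a decreasing sequence of ideals becomes constant modulo `𝔪 ^ k`. -/
lemma chevalley_aux_stab [IsNoetherianRing R] (J : ℕ → Ideal R) (hant : Antitone J) (k : ℕ) :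
    ∃ T : ℕ, ∀ t, T ≤ t → J t ⊔ maximalIdeal R ^ k = J T ⊔ maximalIdeal R ^ k := by
  haveI := chevalley_aux_isArtinian_quot_pow (R := R) k
  set I : Ideal R := maximalIdeal R ^ k with hIdef
  obtain ⟨N, ⟨T, rfl⟩, hmin⟩ := IsArtinian.set_has_minimal (R := R) (M := R ⧸ I)
    {N : Submodule R (R ⧸ I) | ∃ t, N = Submodule.map I.mkQ (J t ⊔ I)} ⟨_, 0, rfl⟩
  refine ⟨T, fun t ht => ?_⟩
  have hle : Submodule.map I.mkQ (J t ⊔ I) ≤ Submodule.map I.mkQ (J T ⊔ I) :=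
    Submodule.map_mono (sup_le_sup_right (hant ht) I)
  have heq : Submodule.map I.mkQ (J t ⊔ I) = Submodule.map I.mkQ (J T ⊔ I) := by
    by_contra hne
    exact hmin _ ⟨t, rfl⟩ (lt_of_le_of_ne hle hne)
  have := congrArg (Submodule.comap I.mkQ) heq
  rwa [Submodule.comap_map_eq, Submodule.comap_map_eq, Submodule.ker_mkQ,
    sup_assoc, sup_idem, sup_assoc, sup_idem] at this

end Aux

/-- Chevalley's theorem: in a complete Noetherian local ring, a decreasing sequence of
ideals with zero intersection is cofinal with the powers of the maximal ideal. -/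
theorem chevalley {R : Type*} [CommRing R] [IsLocalRing R] [IsNoetherianRing R]
    [IsAdicComplete (maximalIdeal R) R]
    (J : ℕ → Ideal R) (hdec : ∀ n, J (n + 1) ≤ J n)
    (hint : (⨅ n, J n) = ⊥) :
    ∀ n : ℕ, 1 ≤ n → ∃ t : ℕ, 1 ≤ t ∧ J t ≤ maximalIdeal R ^ n := by
  intro n hn
  by_contra hc
  push_neg at hc
  set I : Ideal R := maximalIdeal R with hIdef
  have hant : Antitone J := antitone_nat_of_succ_le hdec
  have hJ : ∀ t, ¬ J t ≤ I ^ n := by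
    intro t ht
    exact hc (t + 1) (by omega) ((hant (Nat.le_succ t)).trans ht)
  choose T hT using chevalley_aux_stab J hant (R := R)
  set D : ℕ → Ideal R := fun k => J (T k) ⊔ I ^ k with hD
  have fact1 : ∀ k t, D k ≤ J t ⊔ I ^ k := by
    intro k t
    rcases le_total t (T k) with h | h
    · exact sup_le_sup_right (hant h) _
    · exact le_of_eq (hT k t h).symm
  have fact2 : ∀ k, D k ≤ D (k + 1) ⊔ I ^ k := by
    intro k
    have h1 : D k = J (max (T k) (T (k + 1))) ⊔ I ^ k := (hT k _ (le_max_left _ _)).symm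
    have h2 : J (max (T k) (T (k + 1))) ≤ D (k + 1) := by
      calc J (max (T k) (T (k + 1))) ≤ J (max (T k) (T (k + 1))) ⊔ I ^ (k + 1) := le_sup_left
        _ = D (k + 1) := hT (k + 1) _ (le_max_right _ _)
    rw [h1]
    exact sup_le (h2.trans le_sup_left) le_sup_right
  have fact3 : ∀ k, ∃ a, a ∈ D k ∧ a ∉ I ^ n := by
    intro k
    obtain ⟨a, ha, hna⟩ := SetLike.not_le_iff_exists.mp (hJ (T k))
    exact ⟨a, le_sup_left (a := J (T k)) (b := I ^ k) ha, hna⟩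
  have step : ∀ k (a : R), a ∈ D (n + k) → a ∉ I ^ n →
      ∃ c, c ∈ D (n + k + 1) ∧ c ∉ I ^ n ∧ a - c ∈ I ^ (n + k) := by
    intro k a ha hna
    obtain ⟨c, hcmem, d, hd, hcd⟩ := Submodule.mem_sup.mp (fact2 (n + k) ha)
    refine ⟨c, hcmem, ?_, ?_⟩
    · intro hcn
      apply hna
      have hdn : d ∈ I ^ n := Ideal.pow_le_pow_right (Nat.le_add_right n k) hd
      rw [← hcd]; exact add_mem hcn hdn
    · rw [← hcd]; simpa using hd
  choose! b hb using step
  obtain ⟨a0, ha0, hna0⟩ := fact3 n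
  set x : ℕ → R := fun k => Nat.rec a0 (fun k xk => b k xk) k with hxdef
  have hmem : ∀ k, x k ∈ D (n + k) ∧ x k ∉ I ^ n := by
    intro k
    induction k with
    | zero => exact ⟨ha0, hna0⟩
    | succ k ih =>
        have := hb k (x k) ih.1 ih.2
        exact ⟨this.1, this.2.1⟩
  have hdiff : ∀ k, x k - x (k + 1) ∈ I ^ (n + k) :=
    fun k => (hb k (x k) (hmem k).1 (hmem k).2).2.2
  have hdiff2 : ∀ i j, i ≤ j → x i - x j ∈ I ^ (n + i) := by
    intro i
    refine Nat.le_induction (by simp) ?_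
    intro m hm ih
    have h1 : x m - x (m + 1) ∈ I ^ (n + i) :=
      Ideal.pow_le_pow_right (Nat.add_le_add_left hm n) (hdiff m)
    have := add_mem ih h1
    simpa using this
  -- completeness
  have hprec : IsPrecomplete I R := IsAdicComplete.toIsPrecomplete
  obtain ⟨L, hL⟩ := hprec.prec (f := fun k => x (k - n)) (by
    intro m l hml
    rw [SModEq.sub_mem]
    have h1 : x (m - n) - x (l - n) ∈ I ^ (n + (m - n)) :=
      hdiff2 _ _ (Nat.sub_le_sub_right hml n)
    have h2 : I ^ (n + (m - n)) ≤ I ^ m :=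
      Ideal.pow_le_pow_right (show m ≤ n + (m - n) by omega)
    have h3 : (I ^ m • ⊤ : Submodule R R) = I ^ m := by
      rw [smul_eq_mul, Ideal.mul_top]
    rw [h3]
    exact h2 h1)
  have hLn : ∀ k, x k - L ∈ I ^ (n + k) := by
    intro k
    have := hL (n + k)
    rw [SModEq.sub_mem, smul_eq_mul, Ideal.mul_top] at this
    simpa [Nat.add_sub_cancel_left] using this
  have hLJ : ∀ t, L ∈ J t := by
    intro t
    have hmemk : ∀ k, L ∈ J t ⊔ I ^ k := by
      intro k
      have h1 : x k ∈ J t ⊔ I ^ (n + k) := fact1 (n + k) t (hmem k).1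
      have h2 : L - x k ∈ I ^ (n + k) := by
        have := neg_mem (hLn k); simpa using this
      have h3 : L ∈ J t ⊔ I ^ (n + k) := by
        have := add_mem h1 (le_sup_right (a := J t) h2)
        simpa using this
      have h4 : I ^ (n + k) ≤ I ^ k := Ideal.pow_le_pow_right (Nat.le_add_left k n)
      exact sup_le_sup_left h4 (J t) h3
    have hbot := Ideal.iInf_pow_smul_eq_bot_of_isLocalRing (I := I) (M := R ⧸ (J t))
      (Ideal.IsMaximal.ne_top (maximalIdeal.isMaximal R))
    have hmk : (J t).mkQ L ∈ (⨅ i : ℕ, I ^ i • ⊤ : Submodule R (R ⧸ (J t))) := by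
      rw [Submodule.mem_iInf]
      intro k
      obtain ⟨a, haJ, c, hcI, hac⟩ := Submodule.mem_sup.mp (hmemk k)
      have h1 : (J t).mkQ L = (J t).mkQ c := by
        rw [← hac, map_add]
        have : (J t).mkQ a = 0 := (Submodule.Quotient.mk_eq_zero _).mpr haJ
        rw [this, zero_add]
      rw [h1]
      have h5 : c • ((J t).mkQ 1) = (J t).mkQ c := by
        rw [← map_smul, smul_eq_mul, mul_one]
      rw [← h5]
      exact Submodule.smul_mem_smul hcI Submodule.mem_top
    rw [hbot, Submodule.mem_bot] at hmk
    exact (Submodule.Quotient.mk_eq_zero _).mp hmk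
  have hL0 : L ∈ ⨅ t, J t := Submodule.mem_iInf _ |>.mpr hLJ
  rw [hint, Submodule.mem_bot] at hL0
  have hx0 : x 0 ∈ I ^ n := by
    have := hLn 0
    rw [hL0] at this
    simpa using this
  exact hna0 hx0
end

section
/- Let (R,𝔪) be a Noetherian local ring, J an ideal of R, 𝔟 an ideal such that R/𝔟 is 𝔪-adically complete, and (𝔞_t) a decreasing sequence of ideals with ⋂_t 𝔞_t = 𝔟. Then ⋂_t (J·𝔞_t + 𝔪^t) ⊆ J·𝔟. -/
/-!
Chevalley's theorem in `R ⧸ 𝔟`: for every `n` some `𝔞_t` lies in `𝔟 + 𝔪ⁿ`. By the descending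
chain condition in the Artinian ring `R ⧸ 𝔪ⁿ`, the ideals `𝔞_t + 𝔪ⁿ` stabilize to some `𝔮ₙ`, and
`𝔮ₙ ⊆ 𝔮ₙ₊₁ + 𝔪ⁿ`. Lifting an element of `𝔮_N` step by step gives an `𝔪`-adic Cauchy sequence; its
limit in `R ⧸ 𝔟` lies in every `𝔞_t` (these are closed by Krull's intersection theorem), hence in
`𝔟`. So `J𝔞_t + 𝔪^t ⊆ J𝔟 + 𝔪ⁿ` for large `t`, and `J𝔟` is closed as well.
-/

open IsLocalRing

namespace Ideal

variable {R : Type*} [CommRing R]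

theorem Quotient.mk_smodEq_mk_iff {b I : Ideal R} {x y : R} :
    Quotient.mk b x ≡ Quotient.mk b y [SMOD (I • ⊤ : Submodule R (R ⧸ b))] ↔ x - y ∈ b ⊔ I := by
  rw [SModEq.sub_mem, ← map_sub, smul_top_eq_map, Submodule.restrictScalars_mem,
    Quotient.algebraMap_eq, ← mem_comap, comap_map_of_surjective' _ Quotient.mk_surjective,
    mk_ker, sup_comm]

theorem mem_of_forall_mem_sup_pow {I c : Ideal R} [IsHausdorff I (R ⧸ c)] {x : R}
    (hx : ∀ n, x ∈ c ⊔ I ^ n) : x ∈ c := by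
  rw [← Quotient.eq_zero_iff_mem, ← map_zero (Quotient.mk c)]
  exact IsHausdorff.haus ‹_› _ fun n => by
    rw [← map_zero (Quotient.mk c), Quotient.mk_smodEq_mk_iff, sub_zero]
    exact hx n

theorem sub_mem_of_forall_sub_succ_mem {F : ℕ → Ideal R} (hF : Antitone F) {x : ℕ → R}
    (hx : ∀ k, x k - x (k + 1) ∈ F k) {m n : ℕ} (hmn : m ≤ n) : x m - x n ∈ F m := by
  induction n, hmn using Nat.le_induction with
  | base => simp
  | succ n hmn ih => simpa using add_mem ih (hF hmn (hx n))

theorem exists_forall_sub_mem_sup_pow {I b : Ideal R} [IsPrecomplete I (R ⧸ b)] {x : ℕ → R}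
    (hx : ∀ k, x k - x (k + 1) ∈ I ^ k) : ∃ y, ∀ n, x n - y ∈ b ⊔ I ^ n := by
  obtain ⟨L, hL⟩ := IsPrecomplete.prec ‹_› (f := fun n => Quotient.mk b (x n)) fun hmn =>
    Quotient.mk_smodEq_mk_iff.2 <| mem_sup_right <|
      sub_mem_of_forall_sub_succ_mem (fun _ _ => pow_le_pow_right) hx hmn
  obtain ⟨y, rfl⟩ := Quotient.mk_surjective L
  exact ⟨y, fun n => Quotient.mk_smodEq_mk_iff.1 (hL n)⟩

theorem exists_mem_iInf_sup_pow_sub_mem {I b : Ideal R} [IsPrecomplete I (R ⧸ b)]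
    {q : ℕ → Ideal R} (hq : ∀ n, q n ≤ q (n + 1) ⊔ I ^ n) {N : ℕ} {x : R} (hx : x ∈ q N) :
    ∃ y ∈ ⨅ k, q (N + k) ⊔ b ⊔ I ^ k, x - y ∈ b ⊔ I ^ N := by
  have lift : ∀ n, ∀ y ∈ q n, ∃ z ∈ q (n + 1), y - z ∈ I ^ n := fun n y hy => by
    obtain ⟨z, hz, w, hw, rfl⟩ := Submodule.mem_sup.1 (hq n hy)
    exact ⟨z, hz, by simpa using hw⟩
  choose! next hnext_mem hnext_sub using lift
  let s : ℕ → R := fun k => Nat.rec x (fun k y => next (N + k) y) k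
  have hs : ∀ k, s k ∈ q (N + k) := fun k => Nat.rec hx (fun k ih => hnext_mem _ _ ih) k
  have hsub : ∀ k, s k - s (k + 1) ∈ I ^ (N + k) := fun k => hnext_sub _ _ (hs k)
  obtain ⟨y, hy⟩ := exists_forall_sub_mem_sup_pow (b := b) (x := s) fun k =>
    pow_le_pow_right (Nat.le_add_left k N) (hsub k)
  refine ⟨y, Submodule.mem_iInf _ |>.2 fun k => ?_, ?_⟩
  · have hyk : s k - y ∈ q (N + k) ⊔ b ⊔ I ^ k :=
      sup_le_sup_right (le_sup_right (a := q (N + k))) _ (hy k)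
    simpa using sub_mem (mem_sup_left (mem_sup_left (hs k))) hyk
  · have h0N : s 0 - s N ∈ I ^ N := sub_mem_of_forall_sub_succ_mem
      (F := fun k => I ^ (N + k)) (fun _ _ h => pow_le_pow_right (by omega)) hsub (Nat.zero_le N)
    simpa [s] using add_mem (mem_sup_right h0N) (hy N)

end Ideal

namespace IsLocalRing

variable {R : Type*} [CommRing R] [IsLocalRing R] [IsNoetherianRing R]

theorem isArtinianRing_quotient_maximalIdeal_pow (n : ℕ) :
    IsArtinianRing (R ⧸ maximalIdeal R ^ n) := by
  rcases Nat.eq_zero_or_pos n with rfl | hn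
  · rw [pow_zero, Ideal.one_eq_top]
    infer_instance
  · apply quotient_artinian_of_mem_minimalPrimes_of_isLocalRing
    rw [← Ideal.radical_minimalPrimes, Ideal.radical_pow _ hn.ne',
      (maximalIdeal.isMaximal R).isPrime.radical, Ideal.minimalPrimes_eq_subsingleton_self]
    rfl

theorem exists_sup_pow_eq_of_antitone {a : ℕ → Ideal R} (ha : Antitone a) (n : ℕ) :
    ∃ T, ∀ t ≥ T, a t ⊔ maximalIdeal R ^ n = a T ⊔ maximalIdeal R ^ n := by
  have := isArtinianRing_quotient_maximalIdeal_pow (R := R) n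
  let π := Ideal.Quotient.mk (maximalIdeal R ^ n)
  obtain ⟨T, hT⟩ := IsArtinian.monotone_stabilizes
    (⟨fun t => (a t).map π, fun _ _ h => Ideal.map_mono (ha h)⟩ : ℕ →o (Ideal (R ⧸ _))ᵒᵈ)
  have hcomap : ∀ t, ((a t).map π).comap π = a t ⊔ maximalIdeal R ^ n := fun t => by
    rw [Ideal.comap_map_of_surjective' _ Ideal.Quotient.mk_surjective, Ideal.mk_ker]
  exact ⟨T, fun t ht => by rw [← hcomap, ← hcomap]; exact congrArg (Ideal.comap π) (hT t ht).symm⟩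

theorem exists_le_sup_maximalIdeal_pow {a : ℕ → Ideal R} (ha : Antitone a) {b : Ideal R}
    (hb : ⨅ t, a t = b) [IsPrecomplete (maximalIdeal R) (R ⧸ b)] (n : ℕ) :
    ∃ t, a t ≤ b ⊔ maximalIdeal R ^ n := by
  choose T hT using exists_sup_pow_eq_of_antitone ha
  let q : ℕ → Ideal R := fun n => a (T n) ⊔ maximalIdeal R ^ n
  have hq_le : ∀ n t, q n ≤ a t ⊔ maximalIdeal R ^ n := fun n t =>
    (hT n _ (le_max_left _ t)).ge.trans (sup_le_sup_right (ha (le_max_right _ _)) _)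
  have hq_succ : ∀ n, q n ≤ q (n + 1) ⊔ maximalIdeal R ^ n := fun n =>
    (hT n _ (le_max_left _ (T (n + 1)))).ge.trans
      (sup_le_sup_right ((ha (le_max_right _ _)).trans le_sup_left) _)
  refine ⟨T n, fun x hx => ?_⟩
  obtain ⟨y, hy, hxy⟩ :=
    Ideal.exists_mem_iInf_sup_pow_sub_mem (b := b) hq_succ (Ideal.mem_sup_left hx)
  have hyb : y ∈ b := by
    rw [← hb, Submodule.mem_iInf]
    refine fun t => Ideal.mem_of_forall_mem_sup_pow (I := maximalIdeal R) fun k => ?_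
    refine (sup_le (sup_le ?_ ?_) le_sup_right :
      q (n + k) ⊔ b ⊔ maximalIdeal R ^ k ≤ a t ⊔ maximalIdeal R ^ k) ((Submodule.mem_iInf _).1 hy k)
    · exact (hq_le _ t).trans (sup_le_sup_left (Ideal.pow_le_pow_right (by omega)) _)
    · exact (hb ▸ iInf_le a t).trans le_sup_left
  simpa using add_mem hxy (Ideal.mem_sup_left hyb)

end IsLocalRing

/-- If `(𝔞_t)` is a decreasing sequence of ideals with intersection `𝔟` and `R/𝔟` is
`𝔪`-adically complete, then `⋂_t (J𝔞_t + 𝔪^t) ⊆ J𝔟`. -/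
theorem iInf_mul_add_pow_le {R : Type*} [CommRing R] [IsLocalRing R] [IsNoetherianRing R]
    (J b : Ideal R) (a : ℕ → Ideal R) (hdec : ∀ t, a (t + 1) ≤ a t)
    (hint : (⨅ (t : ℕ) (_ : 1 ≤ t), a t) = b)
    (hcomp : IsAdicComplete (Ideal.map (Ideal.Quotient.mk b) (maximalIdeal R)) (R ⧸ b)) :
    (⨅ (t : ℕ) (_ : 1 ≤ t), (J * a t + maximalIdeal R ^ t)) ≤ J * b := by
  have : IsPrecomplete (maximalIdeal R) (R ⧸ b) :=
    IsPrecomplete.map_algebraMap_iff.1 hcomp.toIsPrecomplete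
  have ha : Antitone fun t => a (t + 1) := antitone_nat_of_succ_le fun t => hdec (t + 1)
  have hb : ⨅ t, a (t + 1) = b := by rw [← hint, iInf_ge_eq_iInf_nat_add]
  intro z hz
  refine Ideal.mem_of_forall_mem_sup_pow (I := maximalIdeal R) fun n => ?_
  obtain ⟨t, ht⟩ := exists_le_sup_maximalIdeal_pow ha hb n
  have hz' : z ∈ J * a (t + n + 1) + maximalIdeal R ^ (t + n + 1) :=
    (Submodule.mem_iInf _).1 ((Submodule.mem_iInf _).1 hz _) (by omega)
  have hle : J * a (t + n + 1) ⊔ maximalIdeal R ^ (t + n + 1) ≤ J * b ⊔ maximalIdeal R ^ n := by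
    refine sup_le ?_ ((Ideal.pow_le_pow_right (by omega)).trans le_sup_right)
    calc J * a (t + n + 1) ≤ J * (b ⊔ maximalIdeal R ^ n) :=
          Ideal.mul_mono_right ((ha (Nat.le_add_right _ _)).trans ht)
      _ = J * b ⊔ J * maximalIdeal R ^ n := Ideal.mul_sup _ _ _
      _ ≤ J * b ⊔ maximalIdeal R ^ n := sup_le_sup_left Ideal.mul_le_right _
  exact hle hz'
end
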